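/- For every complex number s with Re(s) > 1, the series ∑_{n=1}^∞ |c(n)| n^{−s} converges absolutely and ∑_{n=1}^∞ |c(n)| n^{−s} = ζ(s)·ζ(2s−1)/ζ(2s). -/

import Mathlib

/-!
Writing `n = m²k` with `k` squarefree, one has `|c(n)| = m = ∑_{e ∣ m} φ(e)`, and the divisors
`e` of `m` are exactly the `e` with `e² ∣ n`. Hence `|c|` is the Dirichlet convolution of `1` with
the function that equals `φ(e)` at `e²` and vanishes off the squares; the L-series of the latter
at `s` is that of `φ` at `2s`, namely `ζ(2s - 1)/ζ(2s)`, because `φ ⍟ 1 = id`.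
-/

noncomputable def paperC (n : ℕ) : ℤ :=
  ∑ d ∈ n.divisors, if d ^ 2 ∣ n ∧ Squarefree (n / d ^ 2) then
    (d : ℤ) * ArithmeticFunction.moebius (n / d ^ 2) else 0

open LSeries Finset
open scoped LSeries.notation

/-- Cancelling `gcd e m` reduces to `e` coprime to `m`, where `e² ∣ k` forces `e = 1`. -/
theorem Nat.dvd_of_sq_dvd_sq_mul_squarefree {m k e : ℕ} (hk : Squarefree k)
    (h : e ^ 2 ∣ m ^ 2 * k) : e ∣ m := by
  rcases Nat.eq_zero_or_pos (e.gcd m) with h0 | hpos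
  · rw [(Nat.gcd_eq_zero_iff.mp h0).2]
    exact dvd_zero e
  obtain ⟨g, e', m', hg, hcop, rfl, rfl⟩ := Nat.exists_coprime' hpos
  have h' : e' ^ 2 ∣ m' ^ 2 * k := by
    rw [mul_pow, mul_pow, mul_right_comm] at h
    exact Nat.dvd_of_mul_dvd_mul_right (by positivity) h
  have hek : e' * e' ∣ k := sq e' ▸ (hcop.pow 2 2).dvd_of_dvd_mul_left h'
  rw [Nat.isUnit_iff.mp (hk e' hek), one_mul]
  exact dvd_mul_left g m'

theorem Nat.eq_of_sq_mul_squarefree_eq {m k d l : ℕ} (hk : Squarefree k) (hl : Squarefree l)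
    (h : m ^ 2 * k = d ^ 2 * l) : m = d :=
  Nat.dvd_antisymm (Nat.dvd_of_sq_dvd_sq_mul_squarefree hl (h ▸ Dvd.intro k rfl))
    (Nat.dvd_of_sq_dvd_sq_mul_squarefree hk (h ▸ Dvd.intro l rfl))

theorem paperC_sq_mul {m k : ℕ} (hk : Squarefree k) :
    paperC (m ^ 2 * k) = m * ArithmeticFunction.moebius k := by
  rcases eq_or_ne m 0 with rfl | hm
  · simp [paperC]
  have hdiv : m ^ 2 * k / m ^ 2 = k := Nat.mul_div_cancel_left k (by positivity)
  have hn : m ^ 2 * k ≠ 0 := mul_ne_zero (pow_ne_zero 2 hm) hk.ne_zero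
  rw [paperC, sum_eq_single_of_mem m
    (Nat.mem_divisors.mpr ⟨(dvd_pow_self m two_ne_zero).mul_right k, hn⟩),
    if_pos ⟨Dvd.intro k rfl, by rwa [hdiv]⟩, hdiv]
  rintro d - hdm
  refine if_neg fun ⟨hd, hsq⟩ => hdm ?_
  exact (Nat.eq_of_sq_mul_squarefree_eq hk hsq (Nat.mul_div_cancel' hd).symm).symm

theorem abs_paperC_sq_mul {m k : ℕ} (hk : Squarefree k) : |paperC (m ^ 2 * k)| = m := by
  rw [paperC_sq_mul hk, abs_mul, ArithmeticFunction.abs_moebius_eq_one_of_squarefree hk]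
  simp

def onSquares {R : Type*} [Zero R] (f : ℕ → R) (n : ℕ) : R :=
  if Nat.sqrt n ^ 2 = n then f (Nat.sqrt n) else 0

section onSquares

variable {R : Type*} [Zero R] (f : ℕ → R)

@[simp]
theorem onSquares_sq (e : ℕ) : onSquares f (e ^ 2) = f e := by
  simp [onSquares, Nat.sqrt_eq']

theorem onSquares_eq_zero {n : ℕ} (hn : n ∉ Set.range (· ^ 2)) : onSquares f n = 0 :=
  if_neg fun h => hn ⟨_, h⟩

end onSquares

theorem LSeries.term_onSquares_sq (f : ℕ → ℂ) (s : ℂ) (e : ℕ) :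
    term (onSquares f) s (e ^ 2) = term f (2 * s) e := by
  rcases eq_or_ne e 0 with rfl | he
  · simp
  rw [term_of_ne_zero (pow_ne_zero 2 he), term_of_ne_zero he, onSquares_sq,
    Nat.cast_pow, ← Complex.natCast_cpow_natCast_mul, Nat.cast_ofNat]

theorem LSeries.term_onSquares_eq_zero (f : ℕ → ℂ) (s : ℂ) {n : ℕ}
    (hn : n ∉ Set.range (· ^ 2)) : term (onSquares f) s n = 0 := by
  rw [term_def, onSquares_eq_zero f hn, zero_div, ite_self]

theorem LSeriesSummable_onSquares_iff {f : ℕ → ℂ} {s : ℂ} :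
    LSeriesSummable (onSquares f) s ↔ LSeriesSummable f (2 * s) := by
  rw [LSeriesSummable, LSeriesSummable, ← (Nat.pow_left_injective two_ne_zero).summable_iff
    fun n => term_onSquares_eq_zero f s]
  simp only [Function.comp_def, term_onSquares_sq]

theorem LSeries_onSquares (f : ℕ → ℂ) (s : ℂ) : LSeries (onSquares f) s = LSeries f (2 * s) := by
  rw [LSeries, LSeries, ← (Nat.pow_left_injective two_ne_zero).tsum_eq
    fun n hn => by_contra fun h => hn (term_onSquares_eq_zero f s h)]
  simp only [term_onSquares_sq]

theorem LSeries.convolution_one_apply {R : Type*} [Semiring R] (f : ℕ → R) (n : ℕ) :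
    (f ⍟ 1) n = ∑ d ∈ n.divisors, f d := by
  simp only [convolution_def, Pi.one_apply, mul_one]
  exact Nat.sum_divisorsAntidiagonal (fun a _ => f a)

theorem LSeries.term_natCast (s : ℂ) : term (fun n : ℕ => (n : ℂ)) s = term 1 (s - 1) := by
  ext n
  rcases eq_or_ne n 0 with rfl | hn
  · simp
  have hn' : (n : ℂ) ≠ 0 := Nat.cast_ne_zero.mpr hn
  rw [term_of_ne_zero hn, term_of_ne_zero hn, Pi.one_apply, Complex.cpow_sub _ _ hn',
    Complex.cpow_one, one_div_div]

theorem LSeries_natCast {s : ℂ} (hs : 2 < s.re) :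
    LSeries (fun n : ℕ => (n : ℂ)) s = riemannZeta (s - 1) := by
  rw [LSeries, term_natCast, ← LSeries, LSeries_one_eq_riemannZeta]
  rw [Complex.sub_re, Complex.one_re]
  linarith

theorem LSeriesSummable_totient {s : ℂ} (hs : 2 < s.re) :
    LSeriesSummable (fun n => (n.totient : ℂ)) s :=
  LSeriesSummable_of_le_const_mul_rpow hs ⟨1, fun n _ => by
    simpa [show (2 : ℝ) - 1 = 1 by norm_num] using (Nat.cast_le (α := ℝ)).mpr n.totient_le⟩

theorem LSeries_totient {s : ℂ} (hs : 2 < s.re) :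
    LSeries (fun n => (n.totient : ℂ)) s = riemannZeta (s - 1) / riemannZeta s := by
  have hs1 : 1 < s.re := by linarith
  have hconv : (fun n => (n.totient : ℂ)) ⍟ 1 = fun n : ℕ => (n : ℂ) := by
    ext n
    rw [convolution_one_apply, ← Nat.cast_sum, Nat.sum_totient]
  rw [eq_div_iff (riemannZeta_ne_zero_of_one_lt_re hs1), ← LSeries_one_eq_riemannZeta hs1,
    ← LSeries_convolution' (LSeriesSummable_totient hs) (LSeriesSummable_one_iff.mpr hs1),
    hconv, LSeries_natCast hs]

theorem sum_divisors_onSquares_sq_mul {R : Type*} [AddCommMonoid R] (f : ℕ → R) {m k : ℕ}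
    (hk : Squarefree k) : ∑ d ∈ (m ^ 2 * k).divisors, onSquares f d = ∑ e ∈ m.divisors, f e := by
  have hsub : m.divisors.image (· ^ 2) ⊆ (m ^ 2 * k).divisors := by
    simp only [subset_iff, mem_image, Nat.mem_divisors]
    rintro _ ⟨e, ⟨he, hm⟩, rfl⟩
    exact ⟨(pow_dvd_pow_of_dvd he 2).mul_right k, mul_ne_zero (pow_ne_zero 2 hm) hk.ne_zero⟩
  have hzero : ∀ d ∈ (m ^ 2 * k).divisors, d ∉ m.divisors.image (· ^ 2) → onSquares f d = 0 := by
    rintro d hd hdm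
    refine onSquares_eq_zero f ?_
    rintro ⟨e, rfl⟩
    obtain ⟨hdvd, hn⟩ := Nat.mem_divisors.mp hd
    have hm : m ≠ 0 := fun hm => hn (by simp [hm])
    exact hdm (mem_image_of_mem _ (Nat.mem_divisors.mpr
      ⟨Nat.dvd_of_sq_dvd_sq_mul_squarefree hk hdvd, hm⟩))
  rw [← sum_subset hsub hzero, sum_image fun a _ b _ h => Nat.pow_left_injective two_ne_zero h]
  simp only [onSquares_sq]

theorem onSquares_totient_convolution_one (n : ℕ) :
    (onSquares (fun n => (n.totient : ℂ)) ⍟ 1) n = |paperC n| := by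
  obtain ⟨k, m, rfl, hk⟩ := Nat.sq_mul_squarefree n
  rw [convolution_one_apply, sum_divisors_onSquares_sq_mul _ hk, ← Nat.cast_sum, Nat.sum_totient,
    abs_paperC_sq_mul hk, Int.cast_natCast]

/-- For `Re(s) > 1`, the series `∑ |c(n)| n^{−s}` converges absolutely and equals
`ζ(s)ζ(2s−1)/ζ(2s)`. -/
theorem stmt2 (s : ℂ) (hs : 1 < s.re) :
    Summable (fun n : ℕ => ‖((|paperC n| : ℤ) : ℂ) / (n : ℂ) ^ s‖) ∧
    ∑' n : ℕ, ((|paperC n| : ℤ) : ℂ) / (n : ℂ) ^ s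
      = riemannZeta s * riemannZeta (2 * s - 1) / riemannZeta (2 * s) := by
  have h2s : 2 < (2 * s).re := by
    simp only [Complex.mul_re, Complex.re_ofNat, Complex.im_ofNat, zero_mul, sub_zero]
    linarith
  have hsquares : LSeriesSummable (onSquares fun n => (n.totient : ℂ)) s :=
    LSeriesSummable_onSquares_iff.mpr (LSeriesSummable_totient h2s)
  have hone : LSeriesSummable 1 s := LSeriesSummable_one_iff.mpr hs
  have hterm (n : ℕ) : ((|paperC n| : ℤ) : ℂ) / (n : ℂ) ^ s =
      term (onSquares (fun n => (n.totient : ℂ)) ⍟ 1) s n := by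
    rw [term_of_ne_zero' (Complex.ne_zero_of_one_lt_re hs), onSquares_totient_convolution_one]
  simp only [hterm]
  refine ⟨summable_norm_iff.mpr (hsquares.convolution hone), ?_⟩
  rw [← LSeries, LSeries_convolution' hsquares hone, LSeries_onSquares, LSeries_totient h2s,
    LSeries_one_eq_riemannZeta hs]
  ring
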